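/- Let F : ℝ^d → ℝ be ℓ-weakly convex (ℓ ≥ 0), let X ⊆ ℝ^d be nonempty, closed and convex, let ρ > ℓ, and for x ∈ ℝ^d let x̂ := prox_{Φ/ρ}(x), where Φ := F + δ_X. Then there exists a subgradient ĝ ∈ ∂F(x̂) such that for every η > 0, x̂ = Π_X(ηρ x − η ĝ + (1 − ηρ) x̂). -/

import Mathlib

/-! With `φ y := F y + ℓ/2 ‖y - x̂‖² + ρ ⟪x̂ - x, y - x̂⟫`, convex by weak convexity of `F`,
the prox objective is `φ + (ρ - ℓ)/2 ‖· - x̂‖²` up to a constant. The quadratic term has zero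
derivative at `x̂`, so `x̂` minimizes `φ` itself over `X`. Separating the strict epigraph of `φ`
from `X × {φ x̂}` yields a subgradient `v` of `φ` at `x̂` with `⟪v, y - x̂⟫ ≥ 0` on `X`. Then
`ĝ := v + ρ (x - x̂)` is a subgradient of `F` in the weakly convex sense, and the shifted point is
`x̂ - η v`, whose nearest point in `X` is `x̂`. -/

open MeasureTheory
open scoped RealInnerProductSpace

noncomputable section

/-- `q` is the Euclidean projection of `p` onto `X`. -/
def IsProjection {d : ℕ} (X : Set (EuclideanSpace ℝ (Fin d))) (p q : EuclideanSpace ℝ (Fin d)) : Prop :=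
  q ∈ X ∧ ∀ y ∈ X, ‖q - p‖ ≤ ‖y - p‖

/-- `F` is `ℓ`-weakly convex: `x ↦ F x + ℓ/2 ‖x‖²` is convex on `ℝ^d`. -/
def WeaklyConvex {d : ℕ} (ℓ : ℝ) (F : EuclideanSpace ℝ (Fin d) → ℝ) : Prop :=
  ConvexOn ℝ Set.univ fun x => F x + ℓ / 2 * ‖x‖ ^ 2

/-- The subdifferential of an `ℓ`-weakly convex function `F` at `x`. -/
def WCSubdiff {d : ℕ} (ℓ : ℝ) (F : EuclideanSpace ℝ (Fin d) → ℝ) (x : EuclideanSpace ℝ (Fin d)) : Set (EuclideanSpace ℝ (Fin d)) :=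
  {g | ∀ y, F x + ⟪g, y - x⟫ - ℓ / 2 * ‖y - x‖ ^ 2 ≤ F y}

/-- `q = prox_{Φ/ρ}(p)`, i.e. `q` minimizes `y ↦ F y + ρ/2 ‖y - p‖²` over `X`. -/
def IsProx {d : ℕ} (X : Set (EuclideanSpace ℝ (Fin d))) (F : EuclideanSpace ℝ (Fin d) → ℝ) (ρ : ℝ) (p q : EuclideanSpace ℝ (Fin d)) : Prop :=
  q ∈ X ∧ ∀ y ∈ X, F q + ρ / 2 * ‖q - p‖ ^ 2 ≤ F y + ρ / 2 * ‖y - p‖ ^ 2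

section ConvexMinimization

variable {E : Type*} [NormedAddCommGroup E] [NormedSpace ℝ E]

theorem ConvexOn.isMinOn_of_isMinOn_add_sq_norm_sub {φ : E → ℝ} {s : Set E} {a : E} {c : ℝ}
    (hφ : ConvexOn ℝ s φ) (ha : a ∈ s)
    (hmin : IsMinOn (fun y => φ y + c * ‖y - a‖ ^ 2) s a) :
    IsMinOn φ s a := by
  intro y hy
  have hsegment : ∀ t ∈ Set.Ioo (0 : ℝ) 1, φ a ≤ φ y + t * (c * ‖y - a‖ ^ 2) := by
    rintro t ⟨ht0, ht1⟩
    have hz := isMinOn_iff.1 hmin _ (hφ.1.add_smul_sub_mem ha hy ⟨ht0.le, ht1.le⟩)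
    have hconv := hφ.2 ha hy (sub_nonneg.2 ht1.le) ht0.le (sub_add_cancel 1 t)
    rw [show (1 - t) • a + t • y = a + t • (y - a) by module, smul_eq_mul, smul_eq_mul] at hconv
    simp only [sub_self, norm_zero, add_sub_cancel_left, norm_smul,
      Real.norm_of_nonneg ht0.le] at hz
    nlinarith
  have hlim : Filter.Tendsto (fun t : ℝ => φ y + t * (c * ‖y - a‖ ^ 2))
      (nhdsWithin 0 (Set.Ioi 0)) (nhds (φ y)) :=
    (Continuous.tendsto' (by fun_prop) 0 _ (by simp)).mono_left nhdsWithin_le_nhds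
  exact ge_of_tendsto hlim (Filter.eventually_of_mem (Ioo_mem_nhdsGT one_pos) hsegment)

theorem ConvexOn.exists_dual_supporting_epigraph_of_isMinOn {φ : E → ℝ} {s : Set E} {a : E}
    (hφ : ConvexOn ℝ Set.univ φ) (hφc : Continuous φ) (hs : Convex ℝ s) (ha : a ∈ s)
    (hmin : IsMinOn φ s a) :
    ∃ f : StrongDual ℝ (E × ℝ), f (0, 1) < 0 ∧ (∀ y, f (y, φ y) ≤ f (a, φ a)) ∧
      ∀ y ∈ s, f (a, φ a) ≤ f (y, φ a) := by
  have hopen : IsOpen {p : E × ℝ | φ p.1 < p.2} :=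
    isOpen_lt (hφc.comp continuous_fst) continuous_snd
  have hconvex : Convex ℝ {p : E × ℝ | φ p.1 < p.2} := by
    simpa using hφ.convex_strict_epigraph
  have hdisj : Disjoint {p : E × ℝ | φ p.1 < p.2} (s ×ˢ {φ a}) := by
    rw [Set.disjoint_left]
    rintro ⟨y, t⟩ hlt ⟨hy, rfl⟩
    exact (isMinOn_iff.1 hmin y hy).not_gt hlt
  obtain ⟨f, u, hfS, hfT⟩ :=
    geometric_hahn_banach_open hconvex hopen (hs.prod (convex_singleton _)) hdisj
  have hu : u ≤ f (a, φ a) := hfT _ ⟨ha, rfl⟩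
  -- `f < u` on the open strict epigraph, hence `f ≤ u` on its boundary, the graph of `φ`.
  have hgraph : ∀ y, f (y, φ y) ≤ u := by
    intro y
    have hlim : Filter.Tendsto (fun t => f (y, t)) (nhdsWithin (φ y) (Set.Ioi (φ y)))
        (nhds (f (y, φ y))) :=
      ((f.continuous.comp (Continuous.prodMk_right y)).tendsto _).mono_left nhdsWithin_le_nhds
    exact le_of_tendsto hlim (eventually_nhdsWithin_of_forall fun t ht => (hfS (y, t) ht).le)
  refine ⟨f, ?_, fun y => (hgraph y).trans hu,
    fun y hy => (hgraph a).trans (hfT _ ⟨hy, Set.mem_singleton _⟩)⟩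
  have hlt : f (a, φ a + 1) < f (a, φ a) := (hfS _ (lt_add_one (φ a))).trans_le hu
  have hsplit : ((a, φ a + 1) : E × ℝ) = (a, φ a) + (0, 1) := by simp
  rw [hsplit, map_add] at hlt
  linarith

theorem ConvexOn.exists_subgradient_nonneg_on_of_isMinOn {φ : E → ℝ} {s : Set E} {a : E}
    (hφ : ConvexOn ℝ Set.univ φ) (hφc : Continuous φ) (hs : Convex ℝ s) (ha : a ∈ s)
    (hmin : IsMinOn φ s a) :
    ∃ g : StrongDual ℝ E, (∀ y, φ a + g (y - a) ≤ φ y) ∧ ∀ y ∈ s, 0 ≤ g (y - a) := by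
  obtain ⟨f, hf01, hgraph, hconstraint⟩ :=
    hφ.exists_dual_supporting_epigraph_of_isMinOn hφc hs ha hmin
  set L := f.comp (ContinuousLinearMap.inl ℝ E ℝ)
  have hf : ∀ y t, f (y, t) = L y + t * f (0, 1) := fun y t => by
    rw [show ((y, t) : E × ℝ) = (y, 0) + t • (0, 1) by simp, map_add, map_smul, smul_eq_mul]
    rfl
  have hc : 0 < -f (0, 1) := neg_pos.2 hf01
  refine ⟨(-f (0, 1))⁻¹ • L, fun y => ?_, fun y hy => ?_⟩
  · change φ a + (-f (0, 1))⁻¹ * L (y - a) ≤ φ y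
    have := hgraph y
    rw [hf y, hf a] at this
    have := (inv_mul_le_iff₀ hc).2 (show L (y - a) ≤ -f (0, 1) * (φ y - φ a) by
      rw [map_sub]; linarith)
    linarith
  · change 0 ≤ (-f (0, 1))⁻¹ * L (y - a)
    have := hconstraint y hy
    rw [hf y, hf a] at this
    exact mul_nonneg (inv_nonneg.2 hc.le) (by rw [map_sub]; linarith)

end ConvexMinimization

theorem norm_sub_le_norm_sub_of_inner_nonneg {H : Type*} [NormedAddCommGroup H]
    [InnerProductSpace ℝ H] {a p y : H} (h : 0 ≤ ⟪a - p, y - a⟫) : ‖a - p‖ ≤ ‖y - p‖ := by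
  have hexpand : ‖y - p‖ ^ 2 = ‖y - a‖ ^ 2 + 2 * ⟪y - a, a - p⟫ + ‖a - p‖ ^ 2 := by
    rw [← norm_add_sq_real, sub_add_sub_cancel]
  rw [real_inner_comm] at h
  exact (sq_le_sq₀ (norm_nonneg _) (norm_nonneg _)).1 (by nlinarith [sq_nonneg ‖y - a‖])

section Euclidean

variable {d : ℕ}

theorem isProjection_sub_smul {X : Set (EuclideanSpace ℝ (Fin d))}
    {a v : EuclideanSpace ℝ (Fin d)} {η : ℝ} (ha : a ∈ X) (hv : ∀ y ∈ X, 0 ≤ ⟪v, y - a⟫)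
    (hη : 0 ≤ η) :
    IsProjection X (a - η • v) a :=
  ⟨ha, fun y hy => norm_sub_le_norm_sub_of_inner_nonneg <| by
    rw [sub_sub_cancel, real_inner_smul_left]
    exact mul_nonneg hη (hv y hy)⟩

theorem WeaklyConvex.convexOn_add_sq_norm_sub_add_inner {ℓ : ℝ}
    {F : EuclideanSpace ℝ (Fin d) → ℝ} (hF : WeaklyConvex ℓ F)
    (c u : EuclideanSpace ℝ (Fin d)) :
    ConvexOn ℝ Set.univ fun y => F y + ℓ / 2 * ‖y - c‖ ^ 2 + ⟪u, y - c⟫ := by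
  refine ((hF.add ((innerₛₗ ℝ (u - ℓ • c)).convexOn convex_univ)).add_const
    (ℓ / 2 * ‖c‖ ^ 2 - ⟪u, c⟫)).congr fun y _ => ?_
  simp only [Pi.add_apply, innerₛₗ_apply_apply, norm_sub_sq_real, inner_sub_left,
    inner_sub_right, real_inner_smul_left, real_inner_comm c y]
  ring

end Euclidean

theorem prox_is_projection_general {d : ℕ}
    (X : Set (EuclideanSpace ℝ (Fin d))) (hXcvx : Convex ℝ X)
    (F : EuclideanSpace ℝ (Fin d) → ℝ) (ℓ ρ : ℝ)
    (hWC : WeaklyConvex ℓ F)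
    (x xhat : EuclideanSpace ℝ (Fin d)) (hprox : IsProx X F ρ x xhat) :
    ∃ ghat ∈ WCSubdiff ℓ F xhat,
      ∀ η : ℝ, 0 < η →
        IsProjection X ((η * ρ) • x - η • ghat + (1 - η * ρ) • xhat) xhat := by
  set φ := fun y => F y + ℓ / 2 * ‖y - xhat‖ ^ 2 + ⟪ρ • (xhat - x), y - xhat⟫
  have hφ : ConvexOn ℝ Set.univ φ := hWC.convexOn_add_sq_norm_sub_add_inner xhat _
  have hobjective : ∀ y, F y + ρ / 2 * ‖y - x‖ ^ 2
      = φ y + (ρ - ℓ) / 2 * ‖y - xhat‖ ^ 2 + ρ / 2 * ‖xhat - x‖ ^ 2 := fun y => by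
    rw [← sub_add_sub_cancel y xhat x, norm_add_sq_real]
    simp only [φ, real_inner_smul_left, real_inner_comm (y - xhat)]
    ring
  have hmin : IsMinOn φ X xhat := ConvexOn.isMinOn_of_isMinOn_add_sq_norm_sub
    (c := (ρ - ℓ) / 2) (hφ.subset (Set.subset_univ X) hXcvx) hprox.1 <|
    isMinOn_iff.2 fun y hy => by
      have := hprox.2 y hy
      rw [hobjective, hobjective] at this
      linarith
  obtain ⟨g, hgsub, hgX⟩ := hφ.exists_subgradient_nonneg_on_of_isMinOn
    (continuousOn_univ.1 (hφ.continuousOn isOpen_univ)) hXcvx hprox.1 hmin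
  set v := (InnerProductSpace.toDual ℝ _).symm g
  have hv : ∀ z, ⟪v, z⟫ = g z := fun z => InnerProductSpace.toDual_symm_apply
  refine ⟨v - ρ • (xhat - x), fun y => ?_, fun η hη => ?_⟩
  · have := hgsub y
    simp only [φ, sub_self, norm_zero, inner_zero_right] at this
    rw [inner_sub_left, hv]
    linarith
  · convert isProjection_sub_smul hprox.1 (fun y hy => (hv _).trans_ge (hgX y hy)) hη.le using 1
    module

/-- Lemma A.1 (Lemma 3.2 in Davis--Drusvyatskiy): the proximal point is a projection of a
subgradient-shifted point, for every step-size `η > 0`. -/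
theorem prox_is_projection {d : ℕ}
    (X : Set (EuclideanSpace ℝ (Fin d))) (hXne : X.Nonempty) (hXcl : IsClosed X) (hXcvx : Convex ℝ X)
    (F : EuclideanSpace ℝ (Fin d) → ℝ) (ℓ ρ : ℝ) (hℓ : 0 ≤ ℓ) (hρ : ℓ < ρ)
    (hWC : WeaklyConvex ℓ F)
    (x xhat : EuclideanSpace ℝ (Fin d)) (hprox : IsProx X F ρ x xhat) :
    ∃ ghat ∈ WCSubdiff ℓ F xhat,
      ∀ η : ℝ, 0 < η →
        IsProjection X ((η * ρ) • x - η • ghat + (1 - η * ρ) • xhat) xhat :=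
  prox_is_projection_general X hXcvx F ℓ ρ hWC x xhat hprox
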